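/- arXiv:2307.08794 — 5 statements merged into one kernel-verified Lean document; each statement's English description precedes it below -/
import Mathlib

section
/- For every t ∈ Fin K, the K-step multi-timescale Bellman optimality operator H_t = T_t ∘ T_{t+1 mod K} ∘ ⋯ ∘ T_{t+K−1 mod K} has a unique fixed point Q*_t : S × A → ℝ, i.e., there exists exactly one Q with H_t Q = Q. -/
/-!
In the sup norm, a maximum over actions is 1-Lipschitz and averaging against a probability
vector is nonexpansive, so each `T_t` is a `γ`-contraction. The composite `H_t` of `K` of them is
then a `γ ^ K`-contraction of the complete space `S × A → ℝ`, and Banach's fixed point theorem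
applies.
-/

open Finset NNReal

theorem Finset.abs_sup'_sub_sup'_le {ι α : Type*} [AddCommGroup α] [LinearOrder α]
    [IsOrderedAddMonoid α] {s : Finset ι} (hs : s.Nonempty) {f g : ι → α} {c : α}
    (h : ∀ i ∈ s, |f i - g i| ≤ c) : |s.sup' hs f - s.sup' hs g| ≤ c := by
  have sup'_le_sup'_add {f g : ι → α} (h : ∀ i ∈ s, f i - g i ≤ c) :
      s.sup' hs f ≤ s.sup' hs g + c :=
    sup'_le _ _ fun i hi ↦ calc
      f i ≤ g i + c := sub_le_iff_le_add'.mp (h i hi)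
      _ ≤ s.sup' hs g + c := by gcongr; exact le_sup' g hi
  refine abs_sub_le_iff.mpr ⟨sub_le_iff_le_add'.mpr ?_, sub_le_iff_le_add'.mpr ?_⟩
  · exact sup'_le_sup'_add fun i hi ↦ (abs_sub_le_iff.mp (h i hi)).1
  · exact sup'_le_sup'_add fun i hi ↦ (abs_sub_le_iff.mp (h i hi)).2

theorem PMF.sum_toReal_eq_one {S : Type*} [Fintype S] (q : PMF S) :
    ∑ s, (q s).toReal = 1 := by
  rw [← ENNReal.toReal_sum fun s _ ↦ q.apply_ne_top s, ← tsum_fintype (L := .unconditional S),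
    q.tsum_coe, ENNReal.toReal_one]

theorem PMF.abs_sum_toReal_mul_le {S : Type*} [Fintype S] (q : PMF S) {f : S → ℝ} {c : ℝ}
    (hf : ∀ s, |f s| ≤ c) : |∑ s, (q s).toReal * f s| ≤ c := calc
  |∑ s, (q s).toReal * f s| ≤ ∑ s, (q s).toReal * |f s| := by
    refine (abs_sum_le_sum_abs _ _).trans_eq (sum_congr rfl fun s _ ↦ ?_)
    rw [abs_mul, abs_of_nonneg ENNReal.toReal_nonneg]
  _ ≤ ∑ s, (q s).toReal * c := by gcongr with s; exact hf s
  _ = c := by rw [← sum_mul, q.sum_toReal_eq_one, one_mul]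

theorem LipschitzWith.list_foldr {ι α : Type*} [PseudoEMetricSpace α] {f : ι → α → α} {K : ℝ≥0}
    (hf : ∀ i, LipschitzWith K (f i)) (l : List ι) :
    LipschitzWith (K ^ l.length) fun x ↦ l.foldr f x := by
  induction l with
  | nil => exact LipschitzWith.id
  | cons i l ih => simpa [pow_succ', Function.comp_def] using (hf i).comp ih

section Bellman

variable {S A : Type*} [Fintype S] [Fintype A] [Nonempty A]

noncomputable def bellmanOperator (γ : ℝ) (r : S × A → ℝ) (p : S × A → PMF S) (Γ : A → A)
    (Q : S × A → ℝ) (x : S × A) : ℝ :=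
  r x + γ * ∑ s', (p x s').toReal * univ.sup' univ_nonempty fun a' ↦ Q (s', Γ a')

theorem lipschitzWith_bellmanOperator {γ : ℝ} (hγ : 0 ≤ γ) (r : S × A → ℝ)
    (p : S × A → PMF S) (Γ : A → A) :
    LipschitzWith ⟨γ, hγ⟩ (bellmanOperator γ r p Γ) := by
  refine LipschitzWith.of_dist_le_mul fun Q₁ Q₂ ↦ ?_
  refine (dist_pi_le_iff (by positivity)).mpr fun x ↦ ?_
  have hmax (s' : S) : |(univ.sup' univ_nonempty fun a' ↦ Q₁ (s', Γ a')) -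
      univ.sup' univ_nonempty fun a' ↦ Q₂ (s', Γ a')| ≤ dist Q₁ Q₂ :=
    abs_sup'_sub_sup'_le _ fun a' _ ↦ by
      simpa only [Real.dist_eq] using dist_le_pi_dist Q₁ Q₂ (s', Γ a')
  simp only [bellmanOperator, Real.dist_eq, add_sub_add_left_eq_sub, ← mul_sub,
    ← sum_sub_distrib, abs_mul, abs_of_nonneg hγ]
  exact mul_le_mul_of_nonneg_left ((p x).abs_sum_toReal_mul_le hmax) hγ

end Bellman

theorem k_step_bellman_unique_fixed_point_general
    {S A : Type*} [Fintype S] [Fintype A] [Nonempty A]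
    (K : ℕ) (hK : 0 < K) (γ : ℝ) (hγ0 : 0 ≤ γ) (hγ1 : γ < 1)
    (r : Fin K → S × A → ℝ) (p : Fin K → S × A → PMF S) (Γ : Fin K → A → A)
    (T : Fin K → (S × A → ℝ) → (S × A → ℝ))
    (hT : ∀ (t : Fin K) (Q : S × A → ℝ) (s : S) (a : A),
      T t Q (s, a) = r t (s, a) + γ * ∑ s' : S, ((p t (s, a)) s').toReal *
        (Finset.univ.sup' Finset.univ_nonempty fun a' : A => Q (s', Γ t a')))
    (t : Fin K)
    (H : (S × A → ℝ) → (S × A → ℝ))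
    (hH : ∀ Q : S × A → ℝ,
      H Q = (List.range K).foldr
        (fun j Q' => T ⟨(t.val + j) % K, Nat.mod_lt _ hK⟩ Q') Q) :
    ∃! Q : S × A → ℝ, H Q = Q := by
  set γ' : ℝ≥0 := ⟨γ, hγ0⟩
  have hT_eq (u : Fin K) : T u = bellmanOperator γ (r u) (p u) (Γ u) :=
    funext fun Q ↦ funext fun ⟨s, a⟩ ↦ hT u Q s a
  have hH_lip : LipschitzWith (γ' ^ K) H := by
    simpa only [← funext hH, List.length_range] using
      LipschitzWith.list_foldr (f := fun j ↦ T ⟨(t.val + j) % K, Nat.mod_lt _ hK⟩)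
        (fun j ↦ hT_eq _ ▸ lipschitzWith_bellmanOperator hγ0 _ _ _) (List.range K)
  have hH_contr : ContractingWith (γ' ^ K) H :=
    ⟨pow_lt_one₀ γ'.2 (show γ' < 1 from hγ1) hK.ne', hH_lip⟩
  exact ⟨_, hH_contr.fixedPoint_isFixedPt, fun Q hQ ↦ hH_contr.fixedPoint_unique hQ⟩

/-- For every `t ∈ Fin K`, the K-step multi-timescale Bellman
optimality operator `H_t = T_t ∘ T_{(t+1) mod K} ∘ ⋯ ∘ T_{(t+K−1) mod K}`
has a unique fixed point. -/
theorem k_step_bellman_unique_fixed_point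
    {S A : Type*} [Fintype S] [Fintype A] [Nonempty S] [Nonempty A]
    (K : ℕ) (hK : 0 < K) (γ : ℝ) (hγ0 : 0 ≤ γ) (hγ1 : γ < 1)
    (r : Fin K → S × A → ℝ) (p : Fin K → S × A → PMF S) (Γ : Fin K → A → A)
    (T : Fin K → (S × A → ℝ) → (S × A → ℝ))
    (hT : ∀ (t : Fin K) (Q : S × A → ℝ) (s : S) (a : A),
      T t Q (s, a) = r t (s, a) + γ * ∑ s' : S, ((p t (s, a)) s').toReal *
        (Finset.univ.sup' Finset.univ_nonempty fun a' : A => Q (s', Γ t a')))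
    (t : Fin K)
    (H : (S × A → ℝ) → (S × A → ℝ))
    (hH : ∀ Q : S × A → ℝ,
      H Q = (List.range K).foldr
        (fun j Q' => T ⟨(t.val + j) % K, Nat.mod_lt _ hK⟩ Q') Q) :
    ∃! Q : S × A → ℝ, H Q = Q :=
  k_step_bellman_unique_fixed_point_general K hK γ hγ0 hγ1 r p Γ T hT t H hH
end

section
/- Value iteration with the K-step operator converges: for every t ∈ Fin K and every initial Q⁰ : S × A → ℝ, the sequence Qⁿ defined by Qⁿ⁺¹ = H_t Qⁿ converges (in sup norm, equivalently pointwise) to the unique fixed point Q*_t of H_t as n → ∞. -/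
open Finset

/-- Helper: difference of sup's is bounded by pointwise bound. -/
lemma sup'_sub_sup'_le_aux {ι : Type*} [Fintype ι] [Nonempty ι]
    (f g : ι → ℝ) (d : ℝ) (h : ∀ i, |f i - g i| ≤ d) :
    |Finset.univ.sup' Finset.univ_nonempty f - Finset.univ.sup' Finset.univ_nonempty g| ≤ d := by
  rw [abs_le]
  constructor
  · rw [neg_le, neg_sub, sub_le_iff_le_add]
    apply Finset.sup'_le
    intro i _
    have h1 := (abs_le.mp (h i)).1
    have h2 : f i ≤ Finset.univ.sup' Finset.univ_nonempty f := Finset.le_sup' f (Finset.mem_univ i)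
    linarith
  · rw [sub_le_iff_le_add]
    apply Finset.sup'_le
    intro i _
    have h1 := (abs_le.mp (h i)).2
    have h2 : g i ≤ Finset.univ.sup' Finset.univ_nonempty g := Finset.le_sup' g (Finset.mem_univ i)
    linarith

/-- Value iteration with the K-step operator converges: for every
`t ∈ Fin K` and every initial `Q⁰`, the sequence `Qⁿ⁺¹ = H_t Qⁿ` converges in
sup norm to the unique fixed point `Q*_t` of `H_t`. -/
theorem k_step_value_iteration_converges
    {S A : Type*} [Fintype S] [Fintype A] [Nonempty S] [Nonempty A]
    (K : ℕ) (hK : 0 < K) (γ : ℝ) (hγ0 : 0 ≤ γ) (hγ1 : γ < 1)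
    (r : Fin K → S × A → ℝ) (p : Fin K → S × A → PMF S) (Γ : Fin K → A → A)
    (T : Fin K → (S × A → ℝ) → (S × A → ℝ))
    (hT : ∀ (t : Fin K) (Q : S × A → ℝ) (s : S) (a : A),
      T t Q (s, a) = r t (s, a) + γ * ∑ s' : S, ((p t (s, a)) s').toReal *
        (Finset.univ.sup' Finset.univ_nonempty fun a' : A => Q (s', Γ t a')))
    (t : Fin K)
    (H : (S × A → ℝ) → (S × A → ℝ))
    (hH : ∀ Q : S × A → ℝ,
      H Q = (List.range K).foldr
        (fun j Q' => T ⟨(t.val + j) % K, Nat.mod_lt _ hK⟩ Q') Q)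
    (Qstar : S × A → ℝ) (hfix : H Qstar = Qstar)
    (huniq : ∀ Q : S × A → ℝ, H Q = Q → Q = Qstar)
    (Q0 : S × A → ℝ) (Qseq : ℕ → S × A → ℝ)
    (hQ0 : Qseq 0 = Q0) (hQsucc : ∀ n : ℕ, Qseq (n + 1) = H (Qseq n)) :
    Filter.Tendsto
      (fun n : ℕ =>
        Finset.univ.sup' Finset.univ_nonempty fun sa : S × A => |Qseq n sa - Qstar sa|)
      Filter.atTop (nhds 0) := by
  set d : (S × A → ℝ) → (S × A → ℝ) → ℝ :=
    fun Q Q' => Finset.univ.sup' Finset.univ_nonempty fun sa : S × A => |Q sa - Q' sa| with hd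
  have hd_nonneg : ∀ Q Q', 0 ≤ d Q Q' := by
    intro Q Q'
    obtain ⟨sa⟩ : Nonempty (S × A) := inferInstance
    simp only [hd]
    exact le_trans (abs_nonneg (Q sa - Q' sa))
      (Finset.le_sup' (fun sa => |Q sa - Q' sa|) (Finset.mem_univ sa))
  have hd_le : ∀ Q Q' sa, |Q sa - Q' sa| ≤ d Q Q' := by
    intro Q Q' sa
    simp only [hd]
    exact Finset.le_sup' (fun sa => |Q sa - Q' sa|) (Finset.mem_univ sa)
  -- each T is a γ-contraction
  have hTc : ∀ (u : Fin K) (Q Q' : S × A → ℝ), d (T u Q) (T u Q') ≤ γ * d Q Q' := by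
    intro u Q Q'
    apply Finset.sup'_le
    rintro ⟨s, a⟩ _
    rw [hT, hT]
    have hsum : ∀ s' : S,
        |((p u (s, a)) s').toReal *
          (Finset.univ.sup' Finset.univ_nonempty fun a' : A => Q (s', Γ u a')) -
         ((p u (s, a)) s').toReal *
          (Finset.univ.sup' Finset.univ_nonempty fun a' : A => Q' (s', Γ u a'))|
        ≤ ((p u (s, a)) s').toReal * d Q Q' := by
      intro s'
      rw [← mul_sub, abs_mul, abs_of_nonneg ENNReal.toReal_nonneg]
      apply mul_le_mul_of_nonneg_left _ ENNReal.toReal_nonneg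
      exact sup'_sub_sup'_le_aux _ _ _ (fun a' => hd_le Q Q' (s', Γ u a'))
    have hp1 : ∑ s' : S, ((p u (s, a)) s').toReal = 1 := by
      have h := (p u (s, a)).tsum_coe
      rw [tsum_fintype] at h
      rw [← ENNReal.toReal_sum (fun s' _ => PMF.apply_ne_top _ _), h, ENNReal.toReal_one]
    calc |(r u (s, a) + γ * ∑ s' : S, _) - (r u (s, a) + γ * ∑ s' : S, _)|
        = γ * |∑ s' : S, (((p u (s, a)) s').toReal *
            (Finset.univ.sup' Finset.univ_nonempty fun a' : A => Q (s', Γ u a')) -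
           ((p u (s, a)) s').toReal *
            (Finset.univ.sup' Finset.univ_nonempty fun a' : A => Q' (s', Γ u a')))| := by
          rw [Finset.sum_sub_distrib,
            show ∀ x y z : ℝ, (x + γ * y) - (x + γ * z) = γ * (y - z) from fun x y z => by ring,
            abs_mul, abs_of_nonneg hγ0]
      _ ≤ γ * ∑ s' : S, ((p u (s, a)) s').toReal * d Q Q' := by
          apply mul_le_mul_of_nonneg_left _ hγ0
          exact le_trans (Finset.abs_sum_le_sum_abs _ _) (Finset.sum_le_sum fun s' _ => hsum s')
      _ = γ * d Q Q' := by rw [← Finset.sum_mul, hp1, one_mul]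
  -- H is a contraction: d (H Q) (H Q') ≤ γ^K * d Q Q'
  have hHc : ∀ Q Q', d (H Q) (H Q') ≤ γ * d Q Q' := by
    intro Q Q'
    rw [hH, hH]
    have key : ∀ (l : List ℕ),
        d (l.foldr (fun j Q' => T ⟨(t.val + j) % K, Nat.mod_lt _ hK⟩ Q') Q)
          (l.foldr (fun j Q'' => T ⟨(t.val + j) % K, Nat.mod_lt _ hK⟩ Q'') Q')
        ≤ γ ^ l.length * d Q Q' := by
      intro l
      induction l with
      | nil => simp
      | cons j l ih =>
        simp only [List.foldr_cons, List.length_cons, pow_succ]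
        calc _ ≤ γ * d (l.foldr _ Q) (l.foldr _ Q') := hTc _ _ _
          _ ≤ γ * (γ ^ l.length * d Q Q') := mul_le_mul_of_nonneg_left ih hγ0
          _ = γ ^ l.length * γ * d Q Q' := by ring
    calc d _ _ ≤ γ ^ (List.range K).length * d Q Q' := key _
      _ ≤ γ ^ 1 * d Q Q' := by
          apply mul_le_mul_of_nonneg_right _ (hd_nonneg _ _)
          apply pow_le_pow_of_le_one hγ0 (le_of_lt hγ1)
          rw [List.length_range]; exact hK
      _ = γ * d Q Q' := by rw [pow_one]
  -- d (Qseq n) Qstar ≤ γ^n * d Q0 Qstar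
  have hbound : ∀ n, d (Qseq n) Qstar ≤ γ ^ n * d Q0 Qstar := by
    intro n
    induction n with
    | zero => simp [hQ0]
    | succ n ih =>
      rw [hQsucc]
      calc d (H (Qseq n)) Qstar = d (H (Qseq n)) (H Qstar) := by rw [hfix]
        _ ≤ γ * d (Qseq n) Qstar := hHc _ _
        _ ≤ γ * (γ ^ n * d Q0 Qstar) := mul_le_mul_of_nonneg_left ih hγ0
        _ = γ ^ (n + 1) * d Q0 Qstar := by ring
  have h0 : Filter.Tendsto (fun n : ℕ => γ ^ n * d Q0 Qstar) Filter.atTop (nhds 0) := by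
    have := tendsto_pow_atTop_nhds_zero_of_lt_one hγ0 hγ1
    simpa using this.mul_const (d Q0 Qstar)
  refine squeeze_zero (fun n => hd_nonneg _ _) (fun n => hbound n) h0
end

section
/- Optimality of the fixed point over periodic stochastic policies (Lemma 2, stationary-phase case): let π_0, …, π_{K−1} : S → PMF A be stochastic policies, let Q^π be the unique fixed point of the K-step policy-evaluation composition H^π = T^{π_0}_0 ∘ T^{π_1}_1 ∘ ⋯ ∘ T^{π_{K−1}}_{K−1}, and let Q* be the unique fixed point of the K-step optimality composition H = T_0 ∘ T_1 ∘ ⋯ ∘ T_{K−1}. Then Q^π(s, a) ≤ Q*(s, a) for all (s, a) ∈ S × A. -/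
private lemma pmf_sum_toReal_eq_one {B : Type*} [Fintype B] (q : PMF B) :
    ∑ b : B, (q b).toReal = 1 := by
  rw [← ENNReal.toReal_sum (fun b _ => PMF.apply_ne_top q b), ← tsum_fintype (L := .unconditional _),
    PMF.tsum_coe, ENNReal.toReal_one]


/-- Optimality of the fixed point over periodic stochastic
policies: the unique fixed point `Q^π` of the K-step policy-evaluation
composition `H^π = T^{π₀}_0 ∘ ⋯ ∘ T^{π_{K−1}}_{K−1}` is dominated pointwise by
the unique fixed point `Q*` of the K-step optimality composition
`H = T_0 ∘ ⋯ ∘ T_{K−1}`. -/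
theorem periodic_policy_value_le_optimal_value
    {S A : Type*} [Fintype S] [Fintype A] [Nonempty S] [Nonempty A]
    (K : ℕ) (hK : 0 < K) (γ : ℝ) (hγ0 : 0 ≤ γ) (hγ1 : γ < 1)
    (r : Fin K → S × A → ℝ) (p : Fin K → S × A → PMF S) (Γ : Fin K → A → A)
    (T : Fin K → (S × A → ℝ) → (S × A → ℝ))
    (hT : ∀ (t : Fin K) (Q : S × A → ℝ) (s : S) (a : A),
      T t Q (s, a) = r t (s, a) + γ * ∑ s' : S, ((p t (s, a)) s').toReal *
        (Finset.univ.sup' Finset.univ_nonempty fun a' : A => Q (s', Γ t a')))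
    (Tπ : Fin K → (S → PMF A) → (S × A → ℝ) → (S × A → ℝ))
    (hTπ : ∀ (t : Fin K) (π : S → PMF A) (Q : S × A → ℝ) (s : S) (a : A),
      Tπ t π Q (s, a) = r t (s, a) + γ * ∑ s' : S, ((p t (s, a)) s').toReal *
        ∑ a' : A, ((π s') a').toReal * Q (s', Γ t a'))
    (π : Fin K → S → PMF A)
    (Hπ : (S × A → ℝ) → (S × A → ℝ))
    (hHπ : ∀ Q : S × A → ℝ,
      Hπ Q = (List.finRange K).foldr (fun t Q' => Tπ t (π t) Q') Q)
    (H : (S × A → ℝ) → (S × A → ℝ))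
    (hH : ∀ Q : S × A → ℝ, H Q = (List.finRange K).foldr (fun t Q' => T t Q') Q)
    (Qπ : S × A → ℝ) (hQπ : Hπ Qπ = Qπ)
    (hQπuniq : ∀ Q : S × A → ℝ, Hπ Q = Q → Q = Qπ)
    (Qstar : S × A → ℝ) (hQstar : H Qstar = Qstar)
    (hQstaruniq : ∀ Q : S × A → ℝ, H Q = Q → Q = Qstar) :
    ∀ (s : S) (a : A), Qπ (s, a) ≤ Qstar (s, a) := by
  classical
  have hpnn : ∀ (t : Fin K) (x : S × A) (s' : S), (0:ℝ) ≤ ((p t x) s').toReal :=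
    fun _ _ _ => ENNReal.toReal_nonneg
  -- monotonicity of T t
  have hTmono : ∀ (t : Fin K) (Q Q' : S × A → ℝ), (∀ x, Q x ≤ Q' x) →
      ∀ x, T t Q x ≤ T t Q' x := by
    intro t Q Q' h x
    obtain ⟨s, a⟩ := x
    rw [hT, hT]
    have : ∀ s' : S,
        (Finset.univ.sup' Finset.univ_nonempty fun a' : A => Q (s', Γ t a')) ≤
        (Finset.univ.sup' Finset.univ_nonempty fun a' : A => Q' (s', Γ t a')) := by
      intro s'
      apply Finset.sup'_le
      intro b _
      exact le_trans (h _) (Finset.le_sup' (fun a' : A => Q' (s', Γ t a')) (Finset.mem_univ b))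
    apply (add_le_add_iff_left _).mpr
    apply mul_le_mul_of_nonneg_left _ hγ0
    exact Finset.sum_le_sum fun s' _ =>
      mul_le_mul_of_nonneg_left (this s') (hpnn t (s, a) s')
  -- pointwise domination Tπ ≤ T
  have hdom : ∀ (t : Fin K) (Q : S × A → ℝ) (x : S × A), Tπ t (π t) Q x ≤ T t Q x := by
    intro t Q x
    obtain ⟨s, a⟩ := x
    rw [hT, hTπ]
    have : ∀ s' : S, ∑ a' : A, ((π t s') a').toReal * Q (s', Γ t a') ≤
        (Finset.univ.sup' Finset.univ_nonempty fun a' : A => Q (s', Γ t a')) := by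
      intro s'
      calc ∑ a' : A, ((π t s') a').toReal * Q (s', Γ t a')
          ≤ ∑ a' : A, ((π t s') a').toReal *
            (Finset.univ.sup' Finset.univ_nonempty fun a' : A => Q (s', Γ t a')) := by
            apply Finset.sum_le_sum
            intro b _
            exact mul_le_mul_of_nonneg_left
              (Finset.le_sup' (fun a' : A => Q (s', Γ t a')) (Finset.mem_univ b))
              ENNReal.toReal_nonneg
        _ = _ := by
            rw [← Finset.sum_mul]
            have h1 := pmf_sum_toReal_eq_one (π t s')
            rw [h1, one_mul]
    apply (add_le_add_iff_left _).mpr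
    apply mul_le_mul_of_nonneg_left _ hγ0
    exact Finset.sum_le_sum fun s' _ =>
      mul_le_mul_of_nonneg_left (this s') (hpnn t (s, a) s')
  -- folded domination
  have hfold : ∀ (l : List (Fin K)) (Q Q' : S × A → ℝ), (∀ x, Q x ≤ Q' x) →
      ∀ x, l.foldr (fun t Q' => Tπ t (π t) Q') Q x ≤ l.foldr (fun t Q' => T t Q') Q' x := by
    intro l
    induction l with
    | nil => intro Q Q' h x; exact h x
    | cons t l ih =>
      intro Q Q' h x
      simp only [List.foldr_cons]
      exact le_trans (hdom t _ x) (hTmono t _ _ (ih Q Q' h) x)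
  -- folded monotonicity of T
  have hfoldT : ∀ (l : List (Fin K)) (Q Q' : S × A → ℝ), (∀ x, Q x ≤ Q' x) →
      ∀ x, l.foldr (fun t Q' => T t Q') Q x ≤ l.foldr (fun t Q' => T t Q') Q' x := by
    intro l
    induction l with
    | nil => intro Q Q' h x; exact h x
    | cons t l ih =>
      intro Q Q' h x
      simp only [List.foldr_cons]
      exact hTmono t _ _ (ih Q Q' h) x
  have hHmono : ∀ (Q Q' : S × A → ℝ), (∀ x, Q x ≤ Q' x) → ∀ x, H Q x ≤ H Q' x := by
    intro Q Q' h x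
    rw [hH, hH]
    exact hfoldT _ Q Q' h x
  -- Qπ ≤ H Qπ
  have hstep : ∀ x, Qπ x ≤ H Qπ x := by
    intro x
    conv_lhs => rw [← hQπ, hHπ]
    rw [hH]
    exact hfold _ Qπ Qπ (fun _ => le_rfl) x
  -- iterates of H are monotone
  have hitermono : ∀ (n : ℕ) (Q Q' : S × A → ℝ), (∀ x, Q x ≤ Q' x) →
      ∀ x, H^[n] Q x ≤ H^[n] Q' x := by
    intro n
    induction n with
    | zero => intro Q Q' h x; exact h x
    | succ n ih =>
      intro Q Q' h x
      rw [Function.iterate_succ_apply, Function.iterate_succ_apply]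
      exact ih _ _ (hHmono Q Q' h) x
  -- Qπ ≤ H^[n] Qπ
  have hlower : ∀ (n : ℕ) (x : S × A), Qπ x ≤ H^[n] Qπ x := by
    intro n
    induction n with
    | zero => intro x; exact le_rfl
    | succ n ih =>
      intro x
      rw [Function.iterate_succ_apply]
      exact le_trans (ih x) (hitermono n Qπ (H Qπ) hstep x)
  -- one-step contraction
  have hTcon : ∀ (t : Fin K) (Q Q' : S × A → ℝ) (C : ℝ), 0 ≤ C →
      (∀ x, |Q x - Q' x| ≤ C) → ∀ x, |T t Q x - T t Q' x| ≤ γ * C := by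
    intro t Q Q' C hC h x
    obtain ⟨s, a⟩ := x
    rw [hT, hT]
    have hsupdiff : ∀ s' : S,
        |(Finset.univ.sup' Finset.univ_nonempty fun a' : A => Q (s', Γ t a')) -
         (Finset.univ.sup' Finset.univ_nonempty fun a' : A => Q' (s', Γ t a'))| ≤ C := by
      intro s'
      rw [abs_sub_le_iff]
      constructor
      · rw [sub_le_iff_le_add]
        apply Finset.sup'_le
        intro b _
        calc Q (s', Γ t b) ≤ Q' (s', Γ t b) + C := by
              have := h (s', Γ t b); rw [abs_sub_le_iff] at this; linarith [this.1]
          _ ≤ _ := by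
              have := Finset.le_sup' (fun a' : A => Q' (s', Γ t a')) (Finset.mem_univ b)
              linarith
      · rw [sub_le_iff_le_add]
        apply Finset.sup'_le
        intro b _
        calc Q' (s', Γ t b) ≤ Q (s', Γ t b) + C := by
              have := h (s', Γ t b); rw [abs_sub_le_iff] at this; linarith [this.2]
          _ ≤ _ := by
              have := Finset.le_sup' (fun a' : A => Q (s', Γ t a')) (Finset.mem_univ b)
              linarith
    have key : r t (s, a) + γ * (∑ s' : S, ((p t (s, a)) s').toReal *
          (Finset.univ.sup' Finset.univ_nonempty fun a' : A => Q (s', Γ t a'))) -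
        (r t (s, a) + γ * (∑ s' : S, ((p t (s, a)) s').toReal *
          (Finset.univ.sup' Finset.univ_nonempty fun a' : A => Q' (s', Γ t a')))) =
        γ * ∑ s' : S, ((p t (s, a)) s').toReal *
          ((Finset.univ.sup' Finset.univ_nonempty fun a' : A => Q (s', Γ t a')) -
           (Finset.univ.sup' Finset.univ_nonempty fun a' : A => Q' (s', Γ t a'))) := by
      simp only [mul_sub, Finset.sum_sub_distrib]
      ring
    rw [key, abs_mul, abs_of_nonneg hγ0]
    apply mul_le_mul_of_nonneg_left _ hγ0
    calc |∑ s' : S, ((p t (s, a)) s').toReal * _| ≤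
          ∑ s' : S, |((p t (s, a)) s').toReal *
          ((Finset.univ.sup' Finset.univ_nonempty fun a' : A => Q (s', Γ t a')) -
           (Finset.univ.sup' Finset.univ_nonempty fun a' : A => Q' (s', Γ t a')))| :=
          Finset.abs_sum_le_sum_abs _ _
      _ ≤ ∑ s' : S, ((p t (s, a)) s').toReal * C := by
          apply Finset.sum_le_sum
          intro s' _
          rw [abs_mul, abs_of_nonneg (hpnn t (s, a) s')]
          exact mul_le_mul_of_nonneg_left (hsupdiff s') (hpnn t (s, a) s')
      _ = C := by
          rw [← Finset.sum_mul]
          have h1 := pmf_sum_toReal_eq_one (p t (s, a))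
          rw [h1, one_mul]
  -- folded contraction
  have hfoldcon : ∀ (l : List (Fin K)) (Q Q' : S × A → ℝ) (C : ℝ), 0 ≤ C →
      (∀ x, |Q x - Q' x| ≤ C) →
      ∀ x, |l.foldr (fun t Q' => T t Q') Q x - l.foldr (fun t Q' => T t Q') Q' x| ≤
        γ ^ l.length * C := by
    intro l
    induction l with
    | nil => intro Q Q' C hC h x; simpa using h x
    | cons t l ih =>
      intro Q Q' C hC h x
      simp only [List.foldr_cons, List.length_cons]
      have := hTcon t _ _ (γ ^ l.length * C)
        (mul_nonneg (pow_nonneg hγ0 _) hC) (ih Q Q' C hC h) x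
      calc |T t (l.foldr (fun t Q' => T t Q') Q) x - T t (l.foldr (fun t Q' => T t Q') Q') x|
          ≤ γ * (γ ^ l.length * C) := this
        _ = γ ^ (l.length + 1) * C := by ring
  -- the sup distance between Qπ and Qstar
  obtain ⟨x₀⟩ : Nonempty (S × A) := inferInstance
  set M : ℝ := Finset.univ.sup' (Finset.univ_nonempty) (fun x : S × A => |Qπ x - Qstar x|)
    with hM
  have hMnn : 0 ≤ M :=
    le_trans (abs_nonneg _) (Finset.le_sup' (fun x : S × A => |Qπ x - Qstar x|)
      (Finset.mem_univ x₀))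
  have hMle : ∀ x, |Qπ x - Qstar x| ≤ M := fun x =>
    Finset.le_sup' (fun x : S × A => |Qπ x - Qstar x|) (Finset.mem_univ x)
  have hHstarfix : ∀ n, H^[n] Qstar = Qstar := by
    intro n
    induction n with
    | zero => rfl
    | succ n ih => rw [Function.iterate_succ_apply, hQstar, ih]
  -- H^[n] is a (γ^K)^n contraction
  have hgK : 0 ≤ γ ^ K := pow_nonneg hγ0 K
  have hitercon : ∀ (n : ℕ) (x : S × A), |H^[n] Qπ x - Qstar x| ≤ (γ ^ K) ^ n * M := by
    intro n
    induction n with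
    | zero => intro x; simpa using hMle x
    | succ n ih =>
      intro x
      rw [Function.iterate_succ_apply']
      have := hfoldcon (List.finRange K) (H^[n] Qπ) Qstar ((γ ^ K) ^ n * M)
        (mul_nonneg (pow_nonneg hgK n) hMnn) ih x
      rw [List.length_finRange, ← hH, ← hH] at this
      rw [hQstar] at this
      calc |H (H^[n] Qπ) x - Qstar x| ≤ γ ^ K * ((γ ^ K) ^ n * M) := this
        _ = (γ ^ K) ^ (n + 1) * M := by ring
  -- conclude by taking limits
  intro s a
  have hγK1 : γ ^ K < 1 := pow_lt_one₀ hγ0 hγ1 hK.ne'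
  have htend : Filter.Tendsto (fun n : ℕ => (γ ^ K) ^ n * M) Filter.atTop (nhds 0) := by
    have := tendsto_pow_atTop_nhds_zero_of_lt_one hgK hγK1
    simpa using this.mul_const M
  have hle : ∀ n : ℕ, Qπ (s, a) - Qstar (s, a) ≤ (γ ^ K) ^ n * M := by
    intro n
    have h1 := hlower n (s, a)
    have h2 := hitercon n (s, a)
    have := abs_le.mp h2
    linarith [this.1]
  have : Qπ (s, a) - Qstar (s, a) ≤ 0 := ge_of_tendsto' htend hle
  linarith
end

section
/- Policy improvement in a finite MDP with action projection: for deterministic policies μ, μ' : S → A, let Q^μ be the unique fixed point of the deterministic-policy evaluation operator T^μ. If Q^μ(s, Γ(μ' s)) ≥ Q^μ(s, Γ(μ s)) for all s ∈ S, then Q^{μ'}(s, a) ≥ Q^μ(s, a) for all (s, a) ∈ S × A. -/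
/-- Policy improvement in a finite MDP with action projection:
if `Q^μ(s, Γ(μ' s)) ≥ Q^μ(s, Γ(μ s))` for all `s`, then `Q^{μ'} ≥ Q^μ`
pointwise, where `Q^μ` is the unique fixed point of the deterministic-policy
evaluation operator `T^μ`. -/
theorem policy_improvement
    {S A : Type*} [Fintype S] [Fintype A] [Nonempty S] [Nonempty A]
    (r : S × A → ℝ) (p : S × A → PMF S) (γ : ℝ) (hγ0 : 0 ≤ γ) (hγ1 : γ < 1)
    (Γ : A → A)
    (Tμ : (S → A) → (S × A → ℝ) → (S × A → ℝ))
    (hTμ : ∀ (μ : S → A) (Q : S × A → ℝ) (s : S) (a : A),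
      Tμ μ Q (s, a) = r (s, a) + γ * ∑ s' : S, ((p (s, a)) s').toReal *
        Q (s', Γ (μ s')))
    (μ μ' : S → A)
    (Qμ : S × A → ℝ) (hQμ : Tμ μ Qμ = Qμ)
    (hQμuniq : ∀ Q : S × A → ℝ, Tμ μ Q = Q → Q = Qμ)
    (Qμ' : S × A → ℝ) (hQμ' : Tμ μ' Qμ' = Qμ')
    (hQμ'uniq : ∀ Q : S × A → ℝ, Tμ μ' Q = Q → Q = Qμ')
    (himpr : ∀ s : S, Qμ (s, Γ (μ' s)) ≥ Qμ (s, Γ (μ s))) :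
    ∀ (s : S) (a : A), Qμ' (s, a) ≥ Qμ (s, a) := by
  -- sum of probabilities is 1
  have hsum : ∀ x : S × A, ∑ s' : S, ((p x) s').toReal = 1 := by
    intro x
    have h := (p x).tsum_coe
    rw [tsum_fintype] at h
    have h2 : (∑ s' : S, (p x) s').toReal = (1 : ENNReal).toReal := by rw [h]
    rw [ENNReal.toReal_sum (fun a _ => (p x).apply_ne_top a)] at h2
    simpa using h2
  set f : S → ℝ := fun s => Qμ (s, Γ (μ' s)) - Qμ' (s, Γ (μ' s)) with hf
  have key : ∀ x : S × A, Qμ x - Qμ' x =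
      γ * ∑ s' : S, ((p x) s').toReal *
        (Qμ (s', Γ (μ s')) - Qμ' (s', Γ (μ' s'))) := by
    rintro ⟨s, a⟩
    conv_lhs => rw [← hQμ, ← hQμ']
    rw [hTμ, hTμ]
    have h3 : ∑ s' : S, ((p (s, a)) s').toReal *
        (Qμ (s', Γ (μ s')) - Qμ' (s', Γ (μ' s'))) =
        (∑ s' : S, ((p (s, a)) s').toReal * Qμ (s', Γ (μ s'))) -
        ∑ s' : S, ((p (s, a)) s').toReal * Qμ' (s', Γ (μ' s')) := by
      rw [← Finset.sum_sub_distrib]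
      exact Finset.sum_congr rfl fun _ _ => by ring
    rw [h3]; ring
  -- pick a maximizer of f
  obtain ⟨s₀, -, hs₀⟩ := Finset.exists_max_image (Finset.univ : Finset S) f
    ⟨Classical.arbitrary S, Finset.mem_univ _⟩
  have hterm : ∀ (x : S × A) (s' : S),
      Qμ (s', Γ (μ s')) - Qμ' (s', Γ (μ' s')) ≤ f s₀ := by
    intro x s'
    have h1 := himpr s'
    have h2 := hs₀ s' (Finset.mem_univ s')
    simp only [hf] at h2 ⊢
    linarith
  have hbound : ∀ x : S × A, Qμ x - Qμ' x ≤ γ * f s₀ := by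
    intro x
    rw [key x]
    have : ∑ s' : S, ((p x) s').toReal *
        (Qμ (s', Γ (μ s')) - Qμ' (s', Γ (μ' s'))) ≤
        ∑ s' : S, ((p x) s').toReal * f s₀ := by
      apply Finset.sum_le_sum
      intro s' _
      exact mul_le_mul_of_nonneg_left (hterm x s') ENNReal.toReal_nonneg
    have h4 : ∑ s' : S, ((p x) s').toReal * f s₀ = f s₀ := by
      rw [← Finset.sum_mul, hsum x, one_mul]
    nlinarith
  have hfs₀ : f s₀ ≤ 0 := by
    have := hbound (s₀, Γ (μ' s₀))
    simp only [hf] at this ⊢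
    nlinarith
  intro s a
  have := hbound (s, a)
  nlinarith
end

section
/- Existence of an optimal K-periodic deterministic policy (Theorem 1, existence part): there exists a phase-indexed deterministic policy μ : Fin K → S → A such that for every t ∈ Fin K, the unique fixed point Q^μ_t of the cyclic K-step policy-evaluation composition H^μ_t = T^{μ_t}_t ∘ T^{μ_{(t+1) mod K}}_{(t+1) mod K} ∘ ⋯ ∘ T^{μ_{(t+K−1) mod K}}_{(t+K−1) mod K} equals the unique fixed point Q*_t of the cyclic K-step optimality composition H_t = T_t ∘ ⋯ ∘ T_{(t+K−1) mod K}. -/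
private def compOp {X : Type*} (F : ℕ → X → X) (t n : ℕ) (Q : X) : X :=
  (List.range n).foldr (fun j Q' => F (t + j) Q') Q

private lemma compOp_succ_left {X : Type*} (F : ℕ → X → X) (t n : ℕ) (Q : X) :
    compOp F t (n + 1) Q = F t (compOp F (t + 1) n Q) := by
  unfold compOp
  rw [List.range_succ_eq_map, List.foldr_cons, List.foldr_map, Nat.add_zero]
  have h : (fun (x : ℕ) (y : X) => F (t + x.succ) y) = fun j Q' => F (t + 1 + j) Q' := by
    funext j y
    congr 1
    omega
  rw [h]

private lemma compOp_succ_right {X : Type*} (F : ℕ → X → X) (t n : ℕ) (Q : X) :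
    compOp F t (n + 1) Q = compOp F t n (F (t + n) Q) := by
  unfold compOp
  rw [List.range_succ, List.foldr_append, List.foldr_cons, List.foldr_nil]

private lemma compOp_congr {X : Type*} (F : ℕ → X → X) (t t' : ℕ)
    (h : ∀ j, F (t + j) = F (t' + j)) :
    ∀ n (Q : X), compOp F t n Q = compOp F t' n Q := by
  intro n
  induction n with
  | zero => intro Q; rfl
  | succ n ih =>
    intro Q
    rw [compOp_succ_right, compOp_succ_right, ih, h n]

private lemma compOp_chain {X : Type*} (F : ℕ → X → X) (P : ℕ → X)
    (h : ∀ m, F m (P (m + 1)) = P m) :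
    ∀ n t, compOp F t n (P (t + n)) = P t := by
  intro n
  induction n with
  | zero => intro t; rfl
  | succ n ih =>
    intro t
    rw [compOp_succ_right, show t + (n + 1) = (t + n) + 1 from rfl, h (t + n), ih]

private lemma compOp_lip {X : Type*} [MetricSpace X] (γ : ℝ) (hγ0 : 0 ≤ γ)
    (F : ℕ → X → X) (hF : ∀ m Q1 Q2, dist (F m Q1) (F m Q2) ≤ γ * dist Q1 Q2) :
    ∀ n t (Q1 Q2 : X), dist (compOp F t n Q1) (compOp F t n Q2) ≤ γ ^ n * dist Q1 Q2 := by
  intro n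
  induction n with
  | zero => intro t Q1 Q2; simp [compOp]
  | succ n ih =>
    intro t Q1 Q2
    rw [compOp_succ_left, compOp_succ_left]
    calc dist (F t (compOp F (t+1) n Q1)) (F t (compOp F (t+1) n Q2))
        ≤ γ * dist (compOp F (t+1) n Q1) (compOp F (t+1) n Q2) := hF _ _ _
      _ ≤ γ * (γ ^ n * dist Q1 Q2) := mul_le_mul_of_nonneg_left (ih _ _ _) hγ0
      _ = γ ^ (n + 1) * dist Q1 Q2 := by ring

private lemma aux_sup'_abs {A : Type*} [Fintype A] [Nonempty A]
    (f g : A → ℝ) (c : ℝ) (h : ∀ a, |f a - g a| ≤ c) :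
    |Finset.univ.sup' Finset.univ_nonempty f - Finset.univ.sup' Finset.univ_nonempty g| ≤ c := by
  rw [abs_sub_le_iff]
  constructor
  · rw [sub_le_iff_le_add]
    apply Finset.sup'_le
    intro a _
    have h1 := (abs_sub_le_iff.1 (h a)).1
    have h2 : g a ≤ Finset.univ.sup' Finset.univ_nonempty g := Finset.le_sup' g (Finset.mem_univ a)
    linarith
  · rw [sub_le_iff_le_add]
    apply Finset.sup'_le
    intro a _
    have h1 := (abs_sub_le_iff.1 (h a)).2
    have h2 : f a ≤ Finset.univ.sup' Finset.univ_nonempty f := Finset.le_sup' f (Finset.mem_univ a)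
    linarith

/-- Existence of an optimal K-periodic deterministic policy:
there exists a phase-indexed deterministic policy `μ : Fin K → S → A` such
that for every phase `t`, the unique fixed point of the cyclic K-step
policy-evaluation composition `H^μ_t` equals the unique fixed point of the
cyclic K-step optimality composition `H_t`. -/
theorem exists_optimal_K_periodic_deterministic_policy
    {S A : Type*} [Fintype S] [Fintype A] [Nonempty S] [Nonempty A]
    (K : ℕ) (hK : 0 < K) (γ : ℝ) (hγ0 : 0 ≤ γ) (hγ1 : γ < 1)
    (r : Fin K → S × A → ℝ) (p : Fin K → S × A → PMF S) (Γ : Fin K → A → A)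
    (T : Fin K → (S × A → ℝ) → (S × A → ℝ))
    (hT : ∀ (t : Fin K) (Q : S × A → ℝ) (s : S) (a : A),
      T t Q (s, a) = r t (s, a) + γ * ∑ s' : S, ((p t (s, a)) s').toReal *
        (Finset.univ.sup' Finset.univ_nonempty fun a' : A => Q (s', Γ t a')))
    (Tμ : Fin K → (S → A) → (S × A → ℝ) → (S × A → ℝ))
    (hTμ : ∀ (t : Fin K) (μt : S → A) (Q : S × A → ℝ) (s : S) (a : A),
      Tμ t μt Q (s, a) = r t (s, a) + γ * ∑ s' : S, ((p t (s, a)) s').toReal *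
        Q (s', Γ t (μt s'))) :
    ∃ μ : Fin K → S → A, ∀ t : Fin K, ∀ Qμ Qstar : S × A → ℝ,
      ((List.range K).foldr
        (fun j Q' =>
          Tμ ⟨(t.val + j) % K, Nat.mod_lt _ hK⟩
             (μ ⟨(t.val + j) % K, Nat.mod_lt _ hK⟩) Q') Qμ) = Qμ →
      ((List.range K).foldr
        (fun j Q' => T ⟨(t.val + j) % K, Nat.mod_lt _ hK⟩ Q') Qstar) = Qstar →
      Qμ = Qstar := by
  classical
  -- weights sum to 1
  have hw : ∀ (t : Fin K) (s : S) (a : A), ∑ s' : S, ((p t (s, a)) s').toReal = 1 := by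
    intro t s a
    have h := (p t (s, a)).tsum_coe
    rw [tsum_fintype] at h
    have h2 := congrArg ENNReal.toReal h
    rw [ENNReal.toReal_sum (fun s' _ => (p t (s, a)).apply_ne_top s')] at h2
    simpa using h2
  -- basic estimate
  have hest : ∀ (t : Fin K) (s : S) (a : A) (M1 M2 : S → ℝ) (Dv : ℝ),
      0 ≤ Dv → (∀ s', |M1 s' - M2 s'| ≤ Dv) →
      |(r t (s, a) + γ * ∑ s' : S, ((p t (s, a)) s').toReal * M1 s')
        - (r t (s, a) + γ * ∑ s' : S, ((p t (s, a)) s').toReal * M2 s')| ≤ γ * Dv := by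
    intro t s a M1 M2 Dv hDv hM
    have hw0 : ∀ s' : S, 0 ≤ ((p t (s, a)) s').toReal := fun _ => ENNReal.toReal_nonneg
    have h1 : (r t (s, a) + γ * ∑ s' : S, ((p t (s, a)) s').toReal * M1 s')
        - (r t (s, a) + γ * ∑ s' : S, ((p t (s, a)) s').toReal * M2 s')
        = γ * ∑ s' : S, ((p t (s, a)) s').toReal * (M1 s' - M2 s') := by
      have h0 : ∑ s' : S, ((p t (s, a)) s').toReal * (M1 s' - M2 s')
          = (∑ s' : S, ((p t (s, a)) s').toReal * M1 s')
            - ∑ s' : S, ((p t (s, a)) s').toReal * M2 s' := by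
        rw [← Finset.sum_sub_distrib]
        exact Finset.sum_congr rfl fun _ _ => by ring
      rw [h0]; ring
    rw [h1, abs_mul, abs_of_nonneg hγ0]
    have h2 : |∑ s' : S, ((p t (s, a)) s').toReal * (M1 s' - M2 s')| ≤ Dv := by
      calc |∑ s' : S, ((p t (s, a)) s').toReal * (M1 s' - M2 s')|
          ≤ ∑ s' : S, |((p t (s, a)) s').toReal * (M1 s' - M2 s')| :=
            Finset.abs_sum_le_sum_abs _ _
        _ = ∑ s' : S, ((p t (s, a)) s').toReal * |M1 s' - M2 s'| :=
            Finset.sum_congr rfl fun s' _ => by rw [abs_mul, abs_of_nonneg (hw0 s')]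
        _ ≤ ∑ s' : S, ((p t (s, a)) s').toReal * Dv :=
            Finset.sum_le_sum fun s' _ => mul_le_mul_of_nonneg_left (hM s') (hw0 s')
        _ = Dv := by rw [← Finset.sum_mul, hw t s a, one_mul]
    exact mul_le_mul_of_nonneg_left h2 hγ0
  -- Lipschitz bounds
  have hTlip : ∀ (t : Fin K) (Q1 Q2 : S × A → ℝ),
      dist (T t Q1) (T t Q2) ≤ γ * dist Q1 Q2 := by
    intro t Q1 Q2
    refine (dist_pi_le_iff (mul_nonneg hγ0 dist_nonneg)).2 ?_
    rintro ⟨s, a⟩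
    rw [Real.dist_eq, hT t Q1 s a, hT t Q2 s a]
    refine hest t s a _ _ (dist Q1 Q2) dist_nonneg fun s' => ?_
    refine aux_sup'_abs _ _ _ fun a' => ?_
    rw [← Real.dist_eq]
    exact dist_le_pi_dist Q1 Q2 (s', Γ t a')
  have hTμlip : ∀ (t : Fin K) (f : S → A) (Q1 Q2 : S × A → ℝ),
      dist (Tμ t f Q1) (Tμ t f Q2) ≤ γ * dist Q1 Q2 := by
    intro t f Q1 Q2
    refine (dist_pi_le_iff (mul_nonneg hγ0 dist_nonneg)).2 ?_
    rintro ⟨s, a⟩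
    rw [Real.dist_eq, hTμ t f Q1 s a, hTμ t f Q2 s a]
    refine hest t s a _ _ (dist Q1 Q2) dist_nonneg fun s' => ?_
    rw [← Real.dist_eq]
    exact dist_le_pi_dist Q1 Q2 (s', Γ t (f s'))
  -- uniqueness of fixed points of K-fold compositions
  have huniq : ∀ (F : ℕ → (S × A → ℝ) → (S × A → ℝ)),
      (∀ m Q1 Q2, dist (F m Q1) (F m Q2) ≤ γ * dist Q1 Q2) →
      ∀ t (Q1 Q2 : S × A → ℝ), compOp F t K Q1 = Q1 → compOp F t K Q2 = Q2 → Q1 = Q2 := by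
    intro F hF t Q1 Q2 h1 h2
    have hd := compOp_lip γ hγ0 F hF K t Q1 Q2
    rw [h1, h2] at hd
    have hlt : γ ^ K < 1 := pow_lt_one₀ hγ0 hγ1 hK.ne'
    have hge : (0:ℝ) ≤ dist Q1 Q2 := dist_nonneg
    have hle : dist Q1 Q2 ≤ 0 := by nlinarith
    exact eq_of_dist_eq_zero (le_antisymm hle hge)
  -- the optimality operators indexed by ℕ
  set Fop : ℕ → (S × A → ℝ) → (S × A → ℝ) :=
    fun m => T ⟨m % K, Nat.mod_lt _ hK⟩ with hFopdef
  have hFoplip : ∀ m (Q1 Q2 : S × A → ℝ),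
      dist (Fop m Q1) (Fop m Q2) ≤ γ * dist Q1 Q2 := fun m => hTlip _
  have hFopper : ∀ n, Fop (n + K) = Fop n := by
    intro n
    have hfin : ((⟨(n + K) % K, Nat.mod_lt _ hK⟩ : Fin K)) = ⟨n % K, Nat.mod_lt _ hK⟩ :=
      Fin.ext (by simp [Nat.add_mod_right])
    show T ⟨(n + K) % K, Nat.mod_lt _ hK⟩ = T ⟨n % K, Nat.mod_lt _ hK⟩
    rw [hfin]
  -- contraction and fixed points
  have hcc : ((⟨γ, hγ0⟩ : NNReal) ^ K : ℝ) = γ ^ K := by push_cast; rfl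
  have hcontr : ∀ tn : ℕ, ContractingWith ((⟨γ, hγ0⟩ : NNReal) ^ K) (compOp Fop tn K) := by
    intro tn
    constructor
    · rw [← NNReal.coe_lt_coe (r₁ := (⟨γ, hγ0⟩ : NNReal) ^ K)]
      push_cast
      exact pow_lt_one₀ hγ0 hγ1 hK.ne'
    · apply LipschitzWith.of_dist_le_mul
      intro x y
      have h := compOp_lip γ hγ0 Fop hFoplip K tn x y
      erw [NNReal.coe_pow, NNReal.coe_mk]
      exact h
  set P : ℕ → (S × A → ℝ) :=
    fun tn => ContractingWith.fixedPoint (compOp Fop tn K) (hcontr tn) with hPdef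
  have hPfix : ∀ tn, compOp Fop tn K (P tn) = P tn :=
    fun tn => (hcontr tn).fixedPoint_isFixedPt
  have hPper : ∀ m, P (m + K) = P m := by
    intro m
    refine huniq Fop hFoplip m (P (m + K)) (P m) ?_ (hPfix m)
    have hcongr := compOp_congr Fop m (m + K)
      (fun j => by rw [show m + K + j = (m + j) + K by omega, hFopper (m + j)]) K (P (m + K))
    rw [hcongr, hPfix (m + K)]
  have hPmod : ∀ m, P m = P (m % K) := by
    intro m
    induction m using Nat.strong_induction_on with
    | _ m ih =>
      rcases lt_or_ge m K with h | h
      · rw [Nat.mod_eq_of_lt h]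
      · obtain ⟨m', rfl⟩ : ∃ m', m = m' + K := ⟨m - K, by omega⟩
        rw [hPper m', ih m' (by omega), Nat.add_mod_right]
  -- the chain relation  P t = T_t (P (t+1))
  have hchain : ∀ m, Fop m (P (m + 1)) = P m := by
    intro m
    refine huniq Fop hFoplip m (Fop m (P (m + 1))) (P m) ?_ (hPfix m)
    obtain ⟨K', hK'⟩ : ∃ K', K = K' + 1 := ⟨K - 1, by omega⟩
    rw [hK', compOp_succ_left]
    have h1 : Fop m = Fop ((m + 1) + K') := by
      rw [show (m + 1) + K' = m + K by omega]
      exact (hFopper m).symm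
    rw [h1, ← compOp_succ_right Fop (m + 1) K', ← hK', hPfix (m + 1)]
  -- greedy policy
  choose μfun hμmem hμ using fun (t : Fin K) (s : S) =>
    Finset.exists_mem_eq_sup' (Finset.univ_nonempty (α := A))
      (fun a' : A => P (t.val + 1) (s, Γ t a'))
  refine ⟨μfun, ?_⟩
  intro t Qμ Qstar hQμ hQstar
  set Fmu : ℕ → (S × A → ℝ) → (S × A → ℝ) :=
    fun m => Tμ ⟨m % K, Nat.mod_lt _ hK⟩ (μfun ⟨m % K, Nat.mod_lt _ hK⟩) with hFmudef
  have hFmulip : ∀ m (Q1 Q2 : S × A → ℝ),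
      dist (Fmu m Q1) (Fmu m Q2) ≤ γ * dist Q1 Q2 := fun m => hTμlip _ _
  have hQμ' : compOp Fmu t.val K Qμ = Qμ := hQμ
  have hQstar' : compOp Fop t.val K Qstar = Qstar := hQstar
  -- chain relation for the greedy policy
  have hchainμ : ∀ m, Fmu m (P (m + 1)) = P m := by
    intro m
    have ht' : m % K < K := Nat.mod_lt _ hK
    have hPm1 : P (m + 1) = P (m % K + 1) := by
      rw [hPmod (m + 1), hPmod (m % K + 1)]
      conv_rhs => rw [Nat.add_mod, Nat.mod_mod_of_dvd _ dvd_rfl, ← Nat.add_mod]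
    have hTt : Fmu m (P (m + 1)) = T ⟨m % K, Nat.mod_lt _ hK⟩ (P (m + 1)) := by
      funext x
      obtain ⟨s, a⟩ := x
      show Tμ ⟨m % K, Nat.mod_lt _ hK⟩ (μfun ⟨m % K, Nat.mod_lt _ hK⟩) (P (m + 1)) (s, a)
        = T ⟨m % K, Nat.mod_lt _ hK⟩ (P (m + 1)) (s, a)
      rw [hTμ, hT, hPm1]
      congr 1
      congr 1
      refine Finset.sum_congr rfl fun s' _ => ?_
      congr 1
      exact (hμ ⟨m % K, Nat.mod_lt _ hK⟩ s').symm
    rw [hTt]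
    exact hchain m
  have hfixμ : compOp Fmu t.val K (P t.val) = P t.val := by
    conv_lhs => rw [show P t.val = P (t.val + K) from (hPper t.val).symm]
    exact compOp_chain Fmu P hchainμ K t.val
  have h2 : Qμ = P t.val := huniq Fmu hFmulip t.val Qμ (P t.val) hQμ' hfixμ
  have h3 : Qstar = P t.val := huniq Fop hFoplip t.val Qstar (P t.val) hQstar' (hPfix t.val)
  rw [h2, h3]
end
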